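/- Let A be a finite nonempty set and w an n-ary weak near-unanimity operation on A with n ≥ 2. For an n-ary operation f and an m-ary operation g on A, let f◁g denote the (mn)-ary operation (f◁g)(x_1,…,x_{mn}) = f(g(x_1,…,x_m), g(x_{m+1},…,x_{2m}), …, g(x_{mn−m+1},…,x_{mn})). Let v = w◁w◁…◁w, where the composition ◁ occurs |A|! − 1 times (so v is built from |A|! copies of w and has arity n^{|A|!}). Then v is a weak near-unanimity operation on A, the binary operation x∘_v y := v(x,…,x,y) satisfies x∘_v y = x∘_w(x∘_w(… x∘_w(x∘_w y)…)) with ∘_w occurring |A|! times, and v is special: x∘_v(x∘_v y) = x∘_v y for all x,y ∈ A. -/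

import Mathlib

/-- A `k`-ary operation `w` on `A` is a weak near-unanimity operation:
it is idempotent and `w(y,x,…,x) = w(x,y,x,…,x) = … = w(x,…,x,y)`. -/
def IsWNU {A : Type*} {k : ℕ} (w : (Fin k → A) → A) : Prop :=
  (∀ x : A, w (fun _ => x) = x) ∧
  ∀ (x y : A) (i j : Fin k),
    w (Function.update (fun _ => x) i y) = w (Function.update (fun _ => x) j y)

/-- The composition `f ◁ g`: the `(m*n)`-ary operation
`(f◁g)(x₁,…,x_{mn}) = f(g(x₁,…,x_m), g(x_{m+1},…,x_{2m}), …)`. -/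
def triangle {A : Type*} {n m : ℕ} (f : (Fin n → A) → A) (g : (Fin m → A) → A)
    (x : Fin (m * n) → A) : A :=
  f fun i => g fun j =>
    x ⟨i.val * m + j.val, by
      have hi : i.val + 1 ≤ n := i.isLt
      have hj : j.val < m := j.isLt
      calc i.val * m + j.val < i.val * m + m := by omega
        _ = (i.val + 1) * m := by ring
        _ ≤ n * m := Nat.mul_le_mul_right m hi
        _ = m * n := Nat.mul_comm n m⟩

/-- The iterated composition `w ◁ (w ◁ (… ◁ w))` built from `k + 1` copies of
`w` (`k` occurrences of `◁`); it has arity `n ^ (k + 1)`. -/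
def iterTriangle {A : Type*} {n : ℕ} (w : (Fin n → A) → A) :
    (k : ℕ) → (Fin (n ^ (k + 1)) → A) → A
  | 0 => fun x => w fun i => x (Fin.cast (pow_one n).symm i)
  | k + 1 => fun x => triangle w (iterTriangle w k)
      fun j => x (Fin.cast (pow_succ n (k + 1)).symm j)

/-- The derived binary operation `x ∘_w y := w(x, …, x, y)`. -/
def wnuOp {A : Type*} {k : ℕ} (hk : 0 < k) (w : (Fin k → A) → A) (x y : A) : A :=
  w (Function.update (fun _ => x) ⟨k - 1, by omega⟩ y)

/-!
If `f` and `g` are wnu operations, so is `f ◁ g`: changing one argument of `f ◁ g` changes one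
argument of a single copy of `g`, while the other copies return `x` by idempotence, so
`(f ◁ g)(x,…,y,…,x) = x ∘_f (x ∘_g y)`. By induction `x ∘_v y = (x ∘_w ·)^[|A|!] y`.
For any self-map `h` of the finite set `A`, after `|A|` steps the orbit of `y` lies on a cycle,
whose length divides `|A|!`; hence `h^[|A|!] y` is fixed by `h^[|A|!]`.
-/

open Function

namespace IsWNU

variable {A : Type*} {k : ℕ} {w : (Fin k → A) → A}

theorem apply_update (hw : IsWNU w) (hk : 0 < k) (x y : A) (i : Fin k) :
    w (update (fun _ => x) i y) = wnuOp hk w x y :=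
  hw.2 x y i _

theorem apply_update_comp_cast {k' : ℕ} (hw : IsWNU w) (hk : 0 < k) (h : k = k')
    (x y : A) (i : Fin k') :
    w (fun j => update (fun _ => x) i y (Fin.cast h j)) = wnuOp hk w x y := by
  have hcast : (fun j => update (fun _ => x) i y (Fin.cast h j)) =
      update (fun _ => x) (Fin.cast h.symm i) y := by
    funext j
    simp only [update_apply, Fin.ext_iff, Fin.val_cast]
  rw [hcast, hw.apply_update hk]

theorem comp_cast {k' : ℕ} (hw : IsWNU w) (h : k = k') :
    IsWNU fun x : Fin k' → A => w fun j => x (Fin.cast h j) := by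
  refine ⟨fun x => hw.1 x, fun x y i j => ?_⟩
  have hk : 0 < k := h ▸ i.pos
  exact (hw.apply_update_comp_cast hk h x y i).trans (hw.apply_update_comp_cast hk h x y j).symm

theorem wnuOp_comp_cast {k' : ℕ} (hw : IsWNU w) (hk : 0 < k) (hk' : 0 < k') (h : k = k')
    (x y : A) :
    wnuOp hk' (fun x : Fin k' → A => w fun j => x (Fin.cast h j)) x y = wnuOp hk w x y :=
  hw.apply_update_comp_cast hk h x y _

end IsWNU

theorem Nat.mul_add_eq_iff_div_mod {m i j p : ℕ} (hj : j < m) :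
    i * m + j = p ↔ p / m = i ∧ p % m = j := by
  rw [Nat.div_mod_unique (by omega), add_comm, mul_comm]
  simp only [hj, and_true]

section Triangle

variable {A : Type*} {n m : ℕ} {f : (Fin n → A) → A} {g : (Fin m → A) → A}

theorem triangle_update_const {x : A} (hg : g (fun _ => x) = x) (y : A) (p : Fin (m * n)) :
    triangle f g (update (fun _ => x) p y) =
      f (update (fun _ => x) ⟨p / m, Nat.div_lt_of_lt_mul p.isLt⟩
        (g (update (fun _ => x) ⟨p % m, Nat.mod_lt _ (Nat.pos_of_mul_pos_right p.pos)⟩ y))) := by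
  unfold triangle
  congr 1
  funext i
  by_cases hi : i.val = p / m
  · obtain rfl : i = ⟨p / m, Nat.div_lt_of_lt_mul p.isLt⟩ := Fin.ext hi
    rw [update_self]
    congr 1
    funext j
    simp only [update_apply, Fin.ext_iff, Nat.mul_add_eq_iff_div_mod j.isLt, true_and,
      @eq_comm _ (p % m)]
  · rw [update_of_ne (fun h => hi (congrArg Fin.val h))]
    convert hg using 2
    funext j
    refine update_of_ne (fun h => hi ?_) _ _
    exact ((Nat.mul_add_eq_iff_div_mod j.isLt).1 (congrArg Fin.val h)).1.symm

theorem IsWNU.triangle_apply_update (hf : IsWNU f) (hg : IsWNU g) (hn : 0 < n) (hm : 0 < m)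
    (x y : A) (p : Fin (m * n)) :
    triangle f g (update (fun _ => x) p y) = wnuOp hn f x (wnuOp hm g x y) := by
  rw [triangle_update_const (hg.1 x), hg.apply_update hm, hf.apply_update hn]

theorem isWNU_triangle (hf : IsWNU f) (hg : IsWNU g) : IsWNU (triangle f g) := by
  refine ⟨fun x => ?_, fun x y i j => ?_⟩
  · simp only [triangle, hg.1, hf.1]
  · have hm : 0 < m := Nat.pos_of_mul_pos_right i.pos
    have hn : 0 < n := Nat.pos_of_mul_pos_left i.pos
    rw [hf.triangle_apply_update hg hn hm, hf.triangle_apply_update hg hn hm]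

theorem wnuOp_triangle (hf : IsWNU f) (hg : IsWNU g) (hn : 0 < n) (hm : 0 < m) (x y : A) :
    wnuOp (Nat.mul_pos hm hn) (triangle f g) x y = wnuOp hn f x (wnuOp hm g x y) :=
  hf.triangle_apply_update hg hn hm x y _

variable {w : (Fin n → A) → A}

theorem isWNU_iterTriangle (hw : IsWNU w) : ∀ k, IsWNU (iterTriangle w k)
  | 0 => hw.comp_cast (pow_one n).symm
  | k + 1 => (isWNU_triangle hw (isWNU_iterTriangle hw k)).comp_cast (pow_succ n (k + 1)).symm

theorem wnuOp_iterTriangle (hw : IsWNU w) (hn : 0 < n) (x y : A) :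
    ∀ k, wnuOp (pow_pos hn (k + 1)) (iterTriangle w k) x y = (wnuOp hn w x)^[k + 1] y
  | 0 => hw.wnuOp_comp_cast hn _ _ x y
  | k + 1 => by
    rw [iterate_succ_apply', ← wnuOp_iterTriangle hw hn x y k,
      ← wnuOp_triangle hw (isWNU_iterTriangle hw k) hn (pow_pos hn _)]
    exact (isWNU_triangle hw (isWNU_iterTriangle hw k)).wnuOp_comp_cast _ _ _ x y

end Triangle

namespace Function

variable {α : Type*} [Fintype α] (f : α → α)

theorem exists_le_card_iterate_mem_periodicPts (x : α) :
    ∃ a ≤ Fintype.card α, f^[a] x ∈ periodicPts f := by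
  obtain ⟨a, b, hab, heq⟩ := Fintype.exists_ne_map_eq_of_card_lt
    (fun t : Fin (Fintype.card α + 1) => f^[t] x) (by simp)
  wlog hlt : a < b generalizing a b
  · exact this b a hab.symm heq.symm (lt_of_le_of_ne (not_lt.1 hlt) hab.symm)
  refine ⟨a, Nat.lt_succ_iff.1 a.isLt, mk_mem_periodicPts (Nat.sub_pos_of_lt hlt) ?_⟩
  change f^[b - a] (f^[a] x) = f^[a] x
  rw [← iterate_add_apply, Nat.sub_add_cancel hlt.le]
  exact heq.symm

theorem isPeriodicPt_factorial_card_iterate {m : ℕ} (hm : Fintype.card α ≤ m) (x : α) :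
    IsPeriodicPt f (Fintype.card α).factorial (f^[m] x) := by
  obtain ⟨a, ha, hper⟩ := exists_le_card_iterate_mem_periodicPts f x
  rw [← Nat.sub_add_cancel (ha.trans hm), iterate_add_apply]
  exact (isPeriodicPt_factorial_card_of_mem_periodicPts hper).apply_iterate _

end Function

/-- Iterating a weak near-unanimity operation `w` into
`v = w◁w◁…◁w` (with `|A|!` copies of `w`, i.e. `|A|! - 1` compositions)
yields a wnu operation `v` with
`x∘_v y = x∘_w(x∘_w(… (x∘_w y)…))` (`∘_w` occurring `|A|!` times), and `v` is
special: `x∘_v(x∘_v y) = x∘_v y`. -/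
theorem iterated_wnu_special {A : Type*} [Fintype A] {n : ℕ}
    (hn : 2 ≤ n) (w : (Fin n → A) → A) (hw : IsWNU w) :
    IsWNU (iterTriangle w ((Fintype.card A).factorial - 1)) ∧
    (∀ x y : A,
      wnuOp (pow_pos (show 0 < n by omega) _)
          (iterTriangle w ((Fintype.card A).factorial - 1)) x y =
        (wnuOp (show 0 < n by omega) w x)^[(Fintype.card A).factorial] y) ∧
    (∀ x y : A,
      wnuOp (pow_pos (show 0 < n by omega) _)
          (iterTriangle w ((Fintype.card A).factorial - 1)) x
        (wnuOp (pow_pos (show 0 < n by omega) _)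
          (iterTriangle w ((Fintype.card A).factorial - 1)) x y) =
      wnuOp (pow_pos (show 0 < n by omega) _)
          (iterTriangle w ((Fintype.card A).factorial - 1)) x y) := by
  have hn0 : 0 < n := by omega
  have hcopies : (Fintype.card A).factorial - 1 + 1 = (Fintype.card A).factorial :=
    Nat.sub_add_cancel (Nat.factorial_pos _)
  have hv : ∀ x y : A,
      wnuOp (pow_pos hn0 _) (iterTriangle w ((Fintype.card A).factorial - 1)) x y =
        (wnuOp hn0 w x)^[(Fintype.card A).factorial] y := by
    intro x y
    rw [wnuOp_iterTriangle hw hn0, hcopies]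
  refine ⟨isWNU_iterTriangle hw _, hv, fun x y => ?_⟩
  rw [hv, hv]
  exact (isPeriodicPt_factorial_card_iterate _ (Nat.self_le_factorial _) y).eq
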